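/- Let u be a quasi-definite moment functional on real polynomials in d variables with a WOPS {ℙ_n}_{n≥0} normalized so that ∇ℙ_1^t = I_d, let Φ be a symmetric d×d polynomial matrix with deg Φ = p and det⟨u, Φ⟩ ≠ 0, let Ψ be a d×1 polynomial matrix with deg Ψ = q ≥ 1, set s = max{p−2, q−1}, and let L be the associated second-order operator. Assume that for every n ≥ 0 there exist constant real matrices Λ_i^n of size r_i×r_n, for max{1, n−s} ≤ i ≤ n+s, such that L[ℙ_n^t] = Σ_{i=max{1,n−s}}^{n+s} ℙ_i^t Λ_i^n. Then u satisfies a matrix Pearson equation div(Φ u) = (Ψ')^t u, where Ψ' = −Σ_{i=0}^{s+1} ⟨u, (∇ℙ_1^t)^t Φ ∇ℙ_i^t⟩ H_i^{−1} ℙ_i is a d×1 polynomial matrix of degree at most s+1. -/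

import Mathlib

open MvPolynomial Matrix Finset MeasureTheory

noncomputable section

/-- Real polynomials in `d` variables. -/
abbrev MPoly (d : ℕ) := MvPolynomial (Fin d) ℝ

/-- A moment functional: a linear functional on `MPoly d`. -/
abbrev MomF (d : ℕ) := MPoly d →ₗ[ℝ] ℝ

/-- `r_n = binom(n + d - 1, n)`, the dimension of the space of homogeneous
polynomials of degree `n` in `d` variables. -/
def rdim (d n : ℕ) : ℕ := (n + d - 1).choose n

/-- Entrywise application of a moment functional to a polynomial matrix. -/
def mApply {d : ℕ} (u : MomF d) {m n : Type*} (M : Matrix m n (MPoly d)) : Matrix m n ℝ :=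
  Matrix.of fun i j => u (M i j)

/-- The matrix Pearson equation `div(Φ u) = Ψᵗ u`, i.e. `⟨u, Φ ∇f + Ψ f⟩ = 0`
for every polynomial `f` (a system of `d` scalar equations). -/
def Pearson {d : ℕ} (u : MomF d) (Φ : Matrix (Fin d) (Fin d) (MPoly d))
    (Ψ : Fin d → MPoly d) : Prop :=
  ∀ f : MPoly d, ∀ i : Fin d, u (∑ j, Φ i j * pderiv j f + Ψ i * f) = 0

/-- Degree of a polynomial matrix: max of total degrees of the entries. -/
def matDeg {d : ℕ} {m n : Type*} [Fintype m] [Fintype n]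
    (M : Matrix m n (MPoly d)) : ℕ :=
  Finset.univ.sup fun p : m × n => (M p.1 p.2).totalDegree

/-- Degree of a polynomial (column) vector. -/
def vecDeg {d : ℕ} {m : Type*} [Fintype m] (v : m → MPoly d) : ℕ :=
  Finset.univ.sup fun i => (v i).totalDegree

/-- The Jacobian `∇ℙᵗ`: the `d × m` matrix with `(i,k)` entry `∂ᵢ P k`. -/
def gradT {d m : ℕ} (P : Fin m → MPoly d) : Matrix (Fin d) (Fin m) (MPoly d) :=
  Matrix.of fun i k => pderiv i (P k)

/-- The Kronecker product `I_d ⊗ ℙᵗ`: the block-diagonal `d × (d·m)` matrix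
whose `d` diagonal blocks equal the row vector `ℙᵗ`. -/
def kronIdRow {d m : ℕ} (P : Fin m → MPoly d) :
    Matrix (Fin d) (Fin d × Fin m) (MPoly d) :=
  Matrix.of fun i jk => if i = jk.1 then P jk.2 else 0

/-- A constant real matrix viewed as a polynomial matrix. -/
def cmap {d : ℕ} {m n : Type*} (F : Matrix m n ℝ) : Matrix m n (MPoly d) :=
  F.map MvPolynomial.C

/-- `{ℙ_n}` is a weak orthogonal polynomial system with respect to `u`:
each entry of `ℙ_n` has total degree `n`, the entries of `ℙ_0, …, ℙ_n` form a
basis of the polynomials of total degree at most `n` (spanning + linear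
independence), `⟨u, ℙ_n ℙ_mᵗ⟩ = 0` for `n ≠ m`, and `H_n = ⟨u, ℙ_n ℙ_nᵗ⟩` is
nonsingular. -/
structure IsWOPS {d : ℕ} (u : MomF d) (P : (n : ℕ) → Fin (rdim d n) → MPoly d) : Prop where
  deg : ∀ n k, (P n k).totalDegree = n
  span : ∀ n : ℕ, MvPolynomial.restrictTotalDegree (Fin d) ℝ n ≤
    Submodule.span ℝ {g | ∃ m ≤ n, ∃ k, P m k = g}
  indep : LinearIndependent ℝ (fun p : (n : ℕ) × Fin (rdim d n) => P p.1 p.2)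
  orth : ∀ m n, m ≠ n → ∀ j k, u (P m j * P n k) = 0
  Hdet : ∀ n, (Matrix.of fun j k : Fin (rdim d n) => u (P n j * P n k)).det ≠ 0

/-- The matrix `H_n = ⟨u, ℙ_n ℙ_nᵗ⟩`. -/
def Hmat {d : ℕ} (u : MomF d) (P : (n : ℕ) → Fin (rdim d n) → MPoly d) (n : ℕ) :
    Matrix (Fin (rdim d n)) (Fin (rdim d n)) ℝ :=
  Matrix.of fun j k => u (P n j * P n k)

/-- The second-order differential operator
`L[f] = Σ_{i,j} φ_ij ∂²f/∂xᵢ∂xⱼ + Σ_i ψ_i ∂f/∂xᵢ` associated with `Φ`, `Ψ`. -/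
def Lop {d : ℕ} (Φ : Matrix (Fin d) (Fin d) (MPoly d)) (Ψ : Fin d → MPoly d)
    (f : MPoly d) : MPoly d :=
  (∑ i, ∑ j, Φ i j * pderiv i (pderiv j f)) + ∑ i, Ψ i * pderiv i f

/-- The canonical identification `Fin d ≃ Fin (r_1)` (since `r_1 = d`). -/
def fin1cast (d : ℕ) (a : Fin d) : Fin (rdim d 1) :=
  Fin.cast (by simp [rdim, Nat.add_sub_cancel_left]) a

/-- The candidate Pearson polynomial vector
`Ψ = −Σ_{i=0}^{s+1} ⟨u, (∇ℙ_1ᵗ)ᵗ Φ ∇ℙ_iᵗ⟩ H_i⁻¹ ℙ_i`. -/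
def psiDef {d : ℕ} (u : MomF d) (P : (n : ℕ) → Fin (rdim d n) → MPoly d)
    (Φ : Matrix (Fin d) (Fin d) (MPoly d)) (s : ℕ) : Fin d → MPoly d :=
  fun a => -∑ i ∈ Finset.range (s + 2), ∑ k,
    MvPolynomial.C ((mApply u ((gradT (P 1))ᵀ * Φ * gradT (P i)) * (Hmat u P i)⁻¹)
      (fin1cast d a) k) * P i k

/-!
The entries of `ℙ_0, …, ℙ_N` span the polynomials of degree `≤ N`, so a linear functional that
vanishes on every `ℙ_n` vanishes identically; in particular the Pearson equation only has to be
tested on `f = ℙ_n`. The differential–difference relation puts `L[ℙ_n]` in the span of the `ℙ_i`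
with `i ≥ max(1, n - s)`, hence `⟨u, L[f]⟩ = 0` for every `f`. Applied to `f = x_a ℙ_n`, with
`L[x_a f] = x_a L[f] + ψ_a f + 2 (Φ ∇f)_a`, it gives `⟨u, Φ ∇ℙ_nᵗ⟩ = 0` for `n ≥ s + 2`.
For `n ≤ s + 1`, orthogonality and `∇ℙ_1ᵗ = I` show that `Ψ'` is built exactly so that
`⟨u, Ψ' ℙ_nᵗ⟩ = -⟨u, Φ ∇ℙ_nᵗ⟩`; for `n ≥ s + 2` both sides vanish, since `Ψ'` has degree
`≤ s + 1`.
-/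

section Operators

variable {d : ℕ}

theorem totalDegree_le_vecDeg {m : Type*} [Fintype m] (v : m → MPoly d) (i : m) :
    (v i).totalDegree ≤ vecDeg v :=
  Finset.le_sup (f := fun i => (v i).totalDegree) (Finset.mem_univ i)

def lopLinearMap (Φ : Matrix (Fin d) (Fin d) (MPoly d)) (Ψ : Fin d → MPoly d) :
    MPoly d →ₗ[ℝ] MPoly d where
  toFun := Lop Φ Ψ
  map_add' f g := by
    simp only [Lop, map_add, mul_add, Finset.sum_add_distrib]
    ring
  map_smul' c f := by
    simp only [Lop, Derivation.map_smul, mul_smul_comm, Finset.smul_sum, smul_add, RingHom.id_apply]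

@[simp]
theorem lopLinearMap_apply (Φ : Matrix (Fin d) (Fin d) (MPoly d)) (Ψ : Fin d → MPoly d)
    (f : MPoly d) : lopLinearMap Φ Ψ f = Lop Φ Ψ f :=
  rfl

def pearsonRow (Φ : Matrix (Fin d) (Fin d) (MPoly d)) (Ψ : Fin d → MPoly d) (a : Fin d) :
    MPoly d →ₗ[ℝ] MPoly d :=
  ∑ j, LinearMap.mulLeft ℝ (Φ a j) ∘ₗ (pderiv j).toLinearMap + LinearMap.mulLeft ℝ (Ψ a)

@[simp]
theorem pearsonRow_apply (Φ : Matrix (Fin d) (Fin d) (MPoly d)) (Ψ : Fin d → MPoly d)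
    (a : Fin d) (f : MPoly d) :
    pearsonRow Φ Ψ a f = ∑ j, Φ a j * pderiv j f + Ψ a * f := by
  simp [pearsonRow, LinearMap.sum_apply]

theorem Lop_mul (Φ : Matrix (Fin d) (Fin d) (MPoly d)) (Ψ : Fin d → MPoly d) (f g : MPoly d) :
    Lop Φ Ψ (f * g) = f * Lop Φ Ψ g + g * Lop Φ Ψ f +
      ∑ i, ∑ j, Φ i j * (pderiv i f * pderiv j g + pderiv j f * pderiv i g) := by
  have second : ∀ i j, Φ i j * pderiv i (pderiv j (f * g)) =
      f * (Φ i j * pderiv i (pderiv j g)) + g * (Φ i j * pderiv i (pderiv j f)) +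
        Φ i j * (pderiv i f * pderiv j g + pderiv j f * pderiv i g) := by
    intro i j; simp only [pderiv_mul, map_add]; ring
  have first : ∀ i, Ψ i * pderiv i (f * g) = f * (Ψ i * pderiv i g) + g * (Ψ i * pderiv i f) := by
    intro i; rw [pderiv_mul]; ring
  simp only [Lop, second, first, Finset.sum_add_distrib, mul_add, Finset.mul_sum]
  ring

theorem Lop_X (Φ : Matrix (Fin d) (Fin d) (MPoly d)) (Ψ : Fin d → MPoly d) (a : Fin d) :
    Lop Φ Ψ (X a) = Ψ a := by
  simp [Lop, pderiv_X, Pi.single_apply, apply_ite]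

theorem Lop_X_mul {Φ : Matrix (Fin d) (Fin d) (MPoly d)} (hΦ : Φ.IsSymm)
    (Ψ : Fin d → MPoly d) (a : Fin d) (f : MPoly d) :
    Lop Φ Ψ (X a * f) = X a * Lop Φ Ψ f + Ψ a * f + 2 * ∑ j, Φ a j * pderiv j f := by
  rw [Lop_mul, Lop_X]
  simp only [pderiv_X, Pi.single_apply, ite_mul, one_mul, zero_mul, mul_add, mul_ite, mul_zero,
    Finset.sum_add_distrib, Finset.sum_ite_irrel, Finset.sum_const_zero, Finset.sum_ite_eq,
    Finset.mem_univ, ↓reduceIte, hΦ.apply]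
  ring

end Operators

namespace IsWOPS

variable {d : ℕ} {u : MomF d} {P : (n : ℕ) → Fin (rdim d n) → MPoly d}

theorem map_eq_zero_of_totalDegree_le (hW : IsWOPS u P) {M : Type*} [AddCommGroup M]
    [Module ℝ M] (T : MPoly d →ₗ[ℝ] M) {N : ℕ} (hT : ∀ n ≤ N, ∀ k, T (P n k) = 0)
    {f : MPoly d} (hf : f.totalDegree ≤ N) : T f = 0 := by
  have hspan : Submodule.span ℝ {g | ∃ n ≤ N, ∃ k, P n k = g} ≤ LinearMap.ker T := by
    rw [Submodule.span_le]
    rintro _ ⟨n, hn, k, rfl⟩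
    exact hT n hn k
  exact hspan (hW.span N ((mem_restrictTotalDegree (m := N) (p := f)).mpr hf))

theorem map_eq_zero (hW : IsWOPS u P) {M : Type*} [AddCommGroup M] [Module ℝ M]
    (T : MPoly d →ₗ[ℝ] M) (hT : ∀ n k, T (P n k) = 0) (f : MPoly d) : T f = 0 :=
  hW.map_eq_zero_of_totalDegree_le T (fun n _ => hT n) le_rfl

theorem apply_mul_eq_zero (hW : IsWOPS u P) {n : ℕ} (k : Fin (rdim d n)) {g : MPoly d}
    (hg : g.totalDegree < n) : u (g * P n k) = 0 :=
  hW.map_eq_zero_of_totalDegree_le (u ∘ₗ LinearMap.mulRight ℝ (P n k)) (N := n - 1)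
    (fun m hm j => hW.orth m n (by omega) j k) (by omega)

theorem pearson_of_forall (hW : IsWOPS u P) {Φ : Matrix (Fin d) (Fin d) (MPoly d)}
    {Ψ : Fin d → MPoly d}
    (h : ∀ n k a, mApply u (Φ * gradT (P n)) a k + u (Ψ a * P n k) = 0) :
    Pearson u Φ Ψ := by
  intro f a
  rw [← pearsonRow_apply]
  refine hW.map_eq_zero (u ∘ₗ pearsonRow Φ Ψ a) (fun n k => ?_) f
  simpa [map_add, mApply, Matrix.mul_apply, gradT] using h n k a

end IsWOPS

def DiffDiffRelation {d : ℕ} (Φ : Matrix (Fin d) (Fin d) (MPoly d)) (Ψ : Fin d → MPoly d)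
    (P : (n : ℕ) → Fin (rdim d n) → MPoly d) (s : ℕ) : Prop :=
  ∀ n : ℕ, ∃ Λ : (i : ℕ) → Matrix (Fin (rdim d i)) (Fin (rdim d n)) ℝ,
    ∀ k, Lop Φ Ψ (P n k) =
      ∑ i ∈ Finset.Icc (max 1 (n - s)) (n + s), ∑ a, P i a * MvPolynomial.C (Λ i a k)

namespace DiffDiffRelation

variable {d : ℕ} {u : MomF d} {P : (n : ℕ) → Fin (rdim d n) → MPoly d}
  {Φ : Matrix (Fin d) (Fin d) (MPoly d)} {Ψ : Fin d → MPoly d} {s : ℕ}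

theorem apply_mul_Lop_eq_zero (hdd : DiffDiffRelation Φ Ψ P s) (hW : IsWOPS u P) {n : ℕ}
    (k : Fin (rdim d n)) {g : MPoly d} (hg : g.totalDegree < max 1 (n - s)) :
    u (g * Lop Φ Ψ (P n k)) = 0 := by
  obtain ⟨Λ, hΛ⟩ := hdd n
  simp only [hΛ k, Finset.mul_sum, map_sum]
  refine Finset.sum_eq_zero fun i hi => Finset.sum_eq_zero fun b _ => ?_
  have hsmul : g * (P i b * C (Λ i b k)) = Λ i b k • (g * P i b) := by
    rw [smul_eq_C_mul]; ring
  rw [hsmul, _root_.map_smul,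
    hW.apply_mul_eq_zero b (lt_of_lt_of_le hg (Finset.mem_Icc.mp hi).1), smul_zero]

theorem apply_Lop_eq_zero (hdd : DiffDiffRelation Φ Ψ P s) (hW : IsWOPS u P) (f : MPoly d) :
    u (Lop Φ Ψ f) = 0 :=
  hW.map_eq_zero (u ∘ₗ lopLinearMap Φ Ψ)
    (fun n k => by simpa using hdd.apply_mul_Lop_eq_zero hW k (g := 1) (by simp)) f

theorem mApply_mul_gradT_eq_zero (hdd : DiffDiffRelation Φ Ψ P s) (hW : IsWOPS u P)
    (hΦ : Φ.IsSymm) (hΨ : ∀ a, (Ψ a).totalDegree ≤ s + 1) {n : ℕ} (hn : s + 2 ≤ n) :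
    mApply u (Φ * gradT (P n)) = 0 := by
  ext a k
  have h := hdd.apply_Lop_eq_zero hW (X a * P n k)
  rw [Lop_X_mul hΦ, map_add, map_add,
    hdd.apply_mul_Lop_eq_zero hW k (by rw [totalDegree_X]; omega),
    hW.apply_mul_eq_zero k (by have := hΨ a; omega), zero_add, zero_add, two_mul, map_add,
    add_self_eq_zero] at h
  simpa [mApply, Matrix.mul_apply, gradT] using h

end DiffDiffRelation

section PearsonVector

variable {d : ℕ} {u : MomF d} {P : (n : ℕ) → Fin (rdim d n) → MPoly d}

theorem gradT_transpose_mul_of_normalized {P₁ : Fin (rdim d 1) → MPoly d}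
    (hnorm : ∀ (i : Fin d) (k : Fin (rdim d 1)),
      pderiv i (P₁ k) = if (i : ℕ) = (k : ℕ) then 1 else 0)
    {ι : Type*} (M : Matrix (Fin d) ι (MPoly d)) (a : Fin d) (j : ι) :
    ((gradT P₁)ᵀ * M) (fin1cast d a) j = M a j := by
  simp [Matrix.mul_apply, gradT, hnorm, fin1cast, Fin.val_inj]

theorem vecDeg_psiDef_le (hW : IsWOPS u P) (Φ : Matrix (Fin d) (Fin d) (MPoly d)) (s : ℕ) :
    vecDeg (psiDef u P Φ s) ≤ s + 1 := by
  refine Finset.sup_le fun a _ => ?_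
  rw [psiDef, totalDegree_neg]
  refine totalDegree_finsetSum_le fun i hi => totalDegree_finsetSum_le fun k _ => ?_
  refine (totalDegree_mul _ _).trans ?_
  rw [totalDegree_C, hW.deg i k]
  have := Finset.mem_range.mp hi
  omega

theorem apply_psiDef_mul (hW : IsWOPS u P)
    (hnorm : ∀ (i : Fin d) (k : Fin (rdim d 1)),
      pderiv i (P 1 k) = if (i : ℕ) = (k : ℕ) then 1 else 0)
    (Φ : Matrix (Fin d) (Fin d) (MPoly d)) (s : ℕ) {n : ℕ} (k : Fin (rdim d n)) (a : Fin d) :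
    u (psiDef u P Φ s a * P n k) =
      if n ≤ s + 1 then -mApply u (Φ * gradT (P n)) a k else 0 := by
  set V : (i : ℕ) → Matrix (Fin (rdim d 1)) (Fin (rdim d i)) ℝ :=
    fun i => mApply u ((gradT (P 1))ᵀ * Φ * gradT (P i)) * (Hmat u P i)⁻¹
  have expand : u (psiDef u P Φ s a * P n k) =
      -∑ i ∈ Finset.range (s + 2), ∑ b, V i (fin1cast d a) b * u (P i b * P n k) := by
    simp only [psiDef, neg_mul, Finset.sum_mul, map_neg, map_sum, ← smul_eq_C_mul,
      smul_mul_assoc, _root_.map_smul, smul_eq_mul, V]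
  rw [expand]
  split_ifs with hn
  · rw [Finset.sum_eq_single_of_mem n (Finset.mem_range.mpr (by omega))
      fun i _ hin => Finset.sum_eq_zero fun b _ => by rw [hW.orth i n hin b k, mul_zero]]
    have hH : IsUnit (Hmat u P n).det := isUnit_iff_ne_zero.mpr (hW.Hdet n)
    change -(V n * Hmat u P n) (fin1cast d a) k = _
    simp only [V, Matrix.nonsing_inv_mul_cancel_right (h := hH), mApply, Matrix.of_apply, Matrix.mul_assoc,
      gradT_transpose_mul_of_normalized hnorm]
  · refine neg_eq_zero.mpr (Finset.sum_eq_zero fun i hi => Finset.sum_eq_zero fun b _ => ?_)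
    rw [hW.orth i n (by have := Finset.mem_range.mp hi; omega) b k, mul_zero]

end PearsonVector

theorem differential_difference_implies_pearson_general
    {d : ℕ} (u : MomF d) (P : (n : ℕ) → Fin (rdim d n) → MPoly d)
    (hW : IsWOPS u P)
    (hnorm : ∀ (i : Fin d) (k : Fin (rdim d 1)),
      pderiv i (P 1 k) = if (i : ℕ) = (k : ℕ) then 1 else 0)
    (Φ : Matrix (Fin d) (Fin d) (MPoly d)) (hΦsym : Φ.IsSymm)
    (Ψ : Fin d → MPoly d)
    (p q : ℕ) (hq : vecDeg Ψ = q)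
    (s : ℕ) (hs : s = max (p - 2) (q - 1))
    (hdd : ∀ n : ℕ,
      ∃ Λ : (i : ℕ) → Matrix (Fin (rdim d i)) (Fin (rdim d n)) ℝ,
        ∀ k, Lop Φ Ψ (P n k) =
          ∑ i ∈ Finset.Icc (max 1 (n - s)) (n + s), ∑ a, P i a * MvPolynomial.C (Λ i a k)) :
    vecDeg (psiDef u P Φ s) ≤ s + 1 ∧ Pearson u Φ (psiDef u P Φ s) := by
  have hΨ : ∀ a, (Ψ a).totalDegree ≤ s + 1 := fun a => by
    have := totalDegree_le_vecDeg Ψ a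
    omega
  refine ⟨vecDeg_psiDef_le hW Φ s, hW.pearson_of_forall fun n k a => ?_⟩
  rw [apply_psiDef_mul hW hnorm Φ s k a]
  split_ifs with hn
  · exact add_neg_cancel _
  · rw [DiffDiffRelation.mApply_mul_gradT_eq_zero hdd hW hΦsym hΨ (by omega)]
    simp

/-- **Converse: differential–difference relation implies Pearson.**
Let `u` be quasi-definite with WOPS `{ℙ_n}` normalized so `∇ℙ_1ᵗ = I_d`, `Φ`
symmetric of degree `p` with `det⟨u,Φ⟩ ≠ 0`, `Ψ` of degree `q ≥ 1`,
`s = max{p−2, q−1}`, `L` the associated operator. If for every `n` there are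
constant matrices `Λᵢⁿ`, `max{1, n−s} ≤ i ≤ n+s`, with
`L[ℙ_nᵗ] = Σ ℙ_iᵗ Λᵢⁿ`, then `u` satisfies `div(Φ u) = (Ψ')ᵗ u` where
`Ψ' = −Σ_{i=0}^{s+1} ⟨u, (∇ℙ_1ᵗ)ᵗ Φ ∇ℙ_iᵗ⟩ H_i⁻¹ ℙ_i` has degree ≤ `s+1`. -/
theorem differential_difference_implies_pearson
    {d : ℕ} (u : MomF d) (P : (n : ℕ) → Fin (rdim d n) → MPoly d)
    (hW : IsWOPS u P)
    (hnorm : ∀ (i : Fin d) (k : Fin (rdim d 1)),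
      pderiv i (P 1 k) = if (i : ℕ) = (k : ℕ) then 1 else 0)
    (Φ : Matrix (Fin d) (Fin d) (MPoly d)) (hΦsym : Φ.IsSymm)
    (Ψ : Fin d → MPoly d)
    (p q : ℕ) (hp : matDeg Φ = p) (hq : vecDeg Ψ = q) (hq1 : 1 ≤ q)
    (hdet : (mApply u Φ).det ≠ 0)
    (s : ℕ) (hs : s = max (p - 2) (q - 1))
    (hdd : ∀ n : ℕ,
      ∃ Λ : (i : ℕ) → Matrix (Fin (rdim d i)) (Fin (rdim d n)) ℝ,
        ∀ k, Lop Φ Ψ (P n k) =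
          ∑ i ∈ Finset.Icc (max 1 (n - s)) (n + s), ∑ a, P i a * MvPolynomial.C (Λ i a k)) :
    vecDeg (psiDef u P Φ s) ≤ s + 1 ∧ Pearson u Φ (psiDef u P Φ s) :=
  differential_difference_implies_pearson_general u P hW hnorm Φ hΦsym Ψ p q hq s hs hdd
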